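/- arXiv:2603.00008 — 3 statements merged into one kernel-verified Lean document; each statement's English description precedes it below -/
import Mathlib

section
/- Let σ be a gradual semantics satisfying weak monotonicity, G = (Args, τ, Att, Supp) a QBAG, M ⊆ Args a mutable set, and ⪯ ⊆ Args × Args a desired ordering. Suppose there exist x, y ∈ Args such that (x,y) ∈ ⪯ and (y,x) ∉ ⪯ (i.e., x ≺ y), σ_G(x) > σ_G(y), x ∉ M, y ∉ M, R⁻(x) = R⁻(y), and R⁺(x) = R⁺(y). Then SX_{G,M}^σ(⪯) = ∅. -/
/-- A Quantitative Bipolar Argumentation Graph: a set of arguments, an initial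
strength function, and attack/support relations. -/
structure QBAG (U : Type*) where
  Args : Set U
  τ : U → ℝ
  Att : Set (U × U)
  Supp : Set (U × U)

namespace QBAG

variable {U : Type*}

/-- Directed edge relation of the QBAG: attack or support. -/
def edge (G : QBAG U) (a b : U) : Prop := (a, b) ∈ G.Att ∨ (a, b) ∈ G.Supp

/-- `a` can reach `b`: there is a directed path from `a` to `b`. -/
def reaches (G : QBAG U) (a b : U) : Prop := Relation.ReflTransGen G.edge a b

/-- Restriction `G↓S` of a QBAG to a set of arguments `S`. -/
def restrict (G : QBAG U) (S : Set U) : QBAG U :=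
  ⟨S, G.τ, G.Att ∩ S ×ˢ S, G.Supp ∩ S ×ˢ S⟩

/-- Attackers `R⁻(x)` of an argument. -/
def Rneg (G : QBAG U) (x : U) : Set U := {a | (a, x) ∈ G.Att}

/-- Supporters `R⁺(x)` of an argument. -/
def Rpos (G : QBAG U) (x : U) : Set U := {a | (a, x) ∈ G.Supp}

end QBAG

variable {U : Type*}

/-- The defined domain of a partial strength change `δ : Args ⇀ ℝ`. -/
def ddom (δ : U → Option ℝ) : Set U := {x | δ x ≠ none}

/-- `δ` is a strength change of `G`: it differs from `τ` on its defined domain. -/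
def IsStrengthChange (G : QBAG U) (δ : U → Option ℝ) : Prop :=
  ∀ x v, δ x = some v → v ≠ G.τ x

/-- Application `f(G, δ)` of a strength change to a QBAG. -/
def applyChange (G : QBAG U) (δ : U → Option ℝ) : QBAG U :=
  { G with τ := fun x => (δ x).getD (G.τ x) }

/-- The final strength ordering `⪯^S_G` induced by a semantics `σ` on `S`. -/
def fsOrder (σ : QBAG U → U → ℝ) (G : QBAG U) (S : Set U) : Set (U × U) :=
  {p | p.1 ∈ S ∧ p.2 ∈ S ∧ σ G p.1 ≤ σ G p.2}

/-- `G` satisfies a relation `r` w.r.t. `σ` iff `r = ⪯^S_G` for some `S ⊆ Args`. -/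
def SatisfiesOrd (σ : QBAG U → U → ℝ) (G : QBAG U) (r : Set (U × U)) : Prop :=
  ∃ S : Set U, S ⊆ G.Args ∧ fsOrder σ G S = r

/-- `δ` is a strength change explanation (SX) of `r` w.r.t. `σ` and mutable set `M`. -/
def IsSX (σ : QBAG U → U → ℝ) (G : QBAG U) (M : Set U) (r : Set (U × U))
    (δ : U → Option ℝ) : Prop :=
  IsStrengthChange G δ ∧ ddom δ ⊆ M ∧ SatisfiesOrd σ (applyChange G δ) r

/-- The empty strength change `δ_∅`. -/
def emptyChange (U : Type*) : U → Option ℝ := fun _ => none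

/-- The topic set `T(⪯)` of a desired ordering. -/
def topicSet (r : Set (U × U)) : Set U := {x | ∃ y, (x, y) ∈ r ∨ (y, x) ∈ r}

/-- A gradual semantics satisfies weak monotonicity iff for all arguments `x, y`
with `R⁻(x) ⊇ R⁻(y)` and `R⁺(x) ⊆ R⁺(y)`: (1) `τ(x) ≤ τ(y)` implies
`σ_G(x) ≤ σ_G(y)`, and (2) `σ_G(y) < σ_G(x)` implies `τ(y) < τ(x)`. -/
def WeakMonotonicity (σ : QBAG U → U → ℝ) : Prop :=
  ∀ (G : QBAG U) (x y : U), G.Rneg y ⊆ G.Rneg x → G.Rpos x ⊆ G.Rpos y →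
    (G.τ x ≤ G.τ y → σ G x ≤ σ G y) ∧ (σ G y < σ G x → G.τ y < G.τ x)

/-- If `x ≺ y` is desired but `σ_G(x) > σ_G(y)`, `x` and `y` are not mutable and
have the same attackers and supporters, then there is no SX of `⪯` w.r.t. a
weakly monotonic `σ` and `M`. -/
theorem no_SX_of_weak_monotonicity {U : Type*} (σ : QBAG U → U → ℝ)
    (hwm : WeakMonotonicity σ)
    (G : QBAG U) (hfin : G.Args.Finite)
    (hAtt : G.Att ⊆ G.Args ×ˢ G.Args) (hSupp : G.Supp ⊆ G.Args ×ˢ G.Args)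
    (hdisj : G.Att ∩ G.Supp = ∅)
    (M : Set U) (hM : M ⊆ G.Args) (r : Set (U × U))
    (x y : U) (hx : x ∈ G.Args) (hy : y ∈ G.Args)
    (hxy : (x, y) ∈ r) (hyx : (y, x) ∉ r)
    (hgt : σ G y < σ G x)
    (hxM : x ∉ M) (hyM : y ∉ M)
    (hRn : G.Rneg x = G.Rneg y) (hRp : G.Rpos x = G.Rpos y) :
    {δ : U → Option ℝ | IsSX σ G M r δ} = ∅ := by
  ext δ
  simp only [Set.mem_setOf_eq, Set.mem_empty_iff_false, iff_false]
  rintro ⟨hsc, hdom, S, hS, hord⟩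
  -- τ unchanged at x and y
  have hdx : δ x = none := by
    by_contra h; exact hxM (hdom h)
  have hdy : δ y = none := by
    by_contra h; exact hyM (hdom h)
  set G' := applyChange G δ with hG'
  have hτx : G'.τ x = G.τ x := by simp [hG', applyChange, hdx]
  have hτy : G'.τ y = G.τ y := by simp [hG', applyChange, hdy]
  -- relations unchanged
  have hRn' : G'.Rneg x = G'.Rneg y := hRn
  have hRp' : G'.Rpos x = G'.Rpos y := hRp
  -- from G: τ y < τ x
  have h1 : G.τ y < G.τ x :=
    (hwm G x y hRn.ge hRp.le |>.2) hgt
  -- membership of x,y in S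
  have hxS : x ∈ S := by
    have := hord ▸ hxy; exact this.1
  have hyS : y ∈ S := by
    have := hord ▸ hxy; exact this.2.1
  -- (y,x) ∉ fsOrder means σ' y > σ' x
  have hne : ¬ σ G' y ≤ σ G' x := by
    intro h
    exact hyx (hord ▸ ⟨hyS, hxS, h⟩)
  have h2 : σ G' x < σ G' y := lt_of_not_ge hne
  have h3 : G'.τ x < G'.τ y :=
    (hwm G' y x hRn'.le hRp'.ge |>.2) h2
  rw [hτx, hτy] at h3
  exact absurd h3 (not_lt.2 h1.le)
end

section
/- Let σ be a gradual semantics satisfying stability, G = (Args, τ, Att, Supp) a QBAG, M ⊆ Args a mutable set, and ⪯ ⊆ Args × Args a desired ordering that is a total preorder on its topic set T(⪯) (i.e., ⪯ is reflexive on T(⪯), transitive, and total on T(⪯)). If every x ∈ T(⪯) satisfies R⁻(x) = R⁺(x) = ∅ and T(⪯) ⊆ M, then SX_{G,M}^σ(⪯) ≠ ∅. -/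
variable {U : Type*}

/-- A gradual semantics satisfies stability iff arguments without attackers and
supporters keep their initial strength. -/
def Stability (σ : QBAG U → U → ℝ) : Prop :=
  ∀ (G : QBAG U) (x : U), G.Rneg x = ∅ → G.Rpos x = ∅ → σ G x = G.τ x

/-- If `⪯` is a total preorder on its topic set `T(⪯)`, every topic argument has
neither attackers nor supporters and is mutable, then an SX of `⪯` w.r.t. a
stable semantics `σ` and `M` exists. -/
theorem SX_exists_of_free_topic {U : Type*} (σ : QBAG U → U → ℝ)
    (hstab : Stability σ)
    (G : QBAG U) (hfin : G.Args.Finite)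
    (hAtt : G.Att ⊆ G.Args ×ˢ G.Args) (hSupp : G.Supp ⊆ G.Args ×ˢ G.Args)
    (hdisj : G.Att ∩ G.Supp = ∅)
    (M : Set U) (hM : M ⊆ G.Args) (r : Set (U × U))
    (hrefl : ∀ x ∈ topicSet r, (x, x) ∈ r)
    (htrans : ∀ x y z : U, (x, y) ∈ r → (y, z) ∈ r → (x, z) ∈ r)
    (htotal : ∀ x ∈ topicSet r, ∀ y ∈ topicSet r, (x, y) ∈ r ∨ (y, x) ∈ r)
    (hfree : ∀ x ∈ topicSet r, G.Rneg x = ∅ ∧ G.Rpos x = ∅)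
    (hTM : topicSet r ⊆ M) :
    {δ : U → Option ℝ | IsSX σ G M r δ} ≠ ∅ := by
  classical
  set T : Set U := topicSet r with hT
  have hTA : T ⊆ G.Args := hTM.trans hM
  have hTfin : T.Finite := hfin.subset hTA
  -- rank function
  set g : U → ℝ := fun x => ((hTfin.toFinset.filter (fun y => (y, x) ∈ r)).card : ℝ)
    with hg
  have hmemT : ∀ {x y : U}, (x, y) ∈ r → x ∈ T ∧ y ∈ T := by
    intro x y hxy
    exact ⟨⟨y, Or.inl hxy⟩, ⟨x, Or.inr hxy⟩⟩
  have key : ∀ x ∈ T, ∀ y ∈ T, (g x ≤ g y ↔ (x, y) ∈ r) := by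
    intro x hx y hy
    constructor
    · intro hle
      by_contra hxy
      rcases htotal x hx y hy with h | h
      · exact hxy h
      · -- y ⪯ x, so filter y ⊂ filter x strictly (x in filter x not filter y)
        have hsub : hTfin.toFinset.filter (fun z => (z, y) ∈ r) ⊂
            hTfin.toFinset.filter (fun z => (z, x) ∈ r) := by
          constructor
          · intro z hz
            simp only [Finset.mem_filter] at hz ⊢
            exact ⟨hz.1, htrans z y x hz.2 h⟩
          · intro hc
            have hxmem : x ∈ hTfin.toFinset.filter (fun z => (z, x) ∈ r) := by
              simp only [Finset.mem_filter, Set.Finite.mem_toFinset]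
              exact ⟨hx, hrefl x hx⟩
            have := hc hxmem
            simp only [Finset.mem_filter] at this
            exact hxy this.2
        have hlt := Finset.card_lt_card hsub
        have : g y < g x := by simp only [hg]; exact_mod_cast hlt
        linarith
    · intro hxy
      have hsub : hTfin.toFinset.filter (fun z => (z, x) ∈ r) ⊆
          hTfin.toFinset.filter (fun z => (z, y) ∈ r) := by
        intro z hz
        simp only [Finset.mem_filter] at hz ⊢
        exact ⟨hz.1, htrans z x y hz.2 hxy⟩
      have hle2 := Finset.card_le_card hsub
      simp only [hg]
      exact_mod_cast hle2
  -- the strength change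
  set δ : U → Option ℝ := fun x => if x ∈ T ∧ g x ≠ G.τ x then some (g x) else none
    with hδ
  have hτ' : ∀ x ∈ T, (applyChange G δ).τ x = g x := by
    intro x hx
    simp only [applyChange, hδ]
    by_cases h : g x ≠ G.τ x
    · simp [hx, h]
    · push_neg at h
      simp [h]
  have hσ' : ∀ x ∈ T, σ (applyChange G δ) x = g x := by
    intro x hx
    have hfr := hfree x hx
    have hneg : (applyChange G δ).Rneg x = ∅ := hfr.1
    have hpos : (applyChange G δ).Rpos x = ∅ := hfr.2
    rw [hstab (applyChange G δ) x hneg hpos, hτ' x hx]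
  intro hcontra
  have : δ ∈ {δ : U → Option ℝ | IsSX σ G M r δ} := by
    refine ⟨?_, ?_, ?_⟩
    · intro x v hxv
      simp only [hδ] at hxv
      split_ifs at hxv with h
      · cases hxv; exact h.2
    · intro x hx
      simp only [ddom, hδ, Set.mem_setOf_eq] at hx
      split_ifs at hx with h
      · exact hTM h.1
      · exact absurd rfl hx
    · refine ⟨T, hTA, ?_⟩
      ext ⟨x, y⟩
      simp only [fsOrder, Set.mem_setOf_eq]
      constructor
      · rintro ⟨hx, hy, hle⟩
        rw [hσ' x hx, hσ' y hy] at hle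
        exact (key x hx y hy).1 hle
      · intro hxy
        obtain ⟨hx, hy⟩ := hmemT hxy
        refine ⟨hx, hy, ?_⟩
        rw [hσ' x hx, hσ' y hy]
        exact (key x hx y hy).2 hxy
  rw [hcontra] at this
  exact this
end

section
/- Let σ be a gradual semantics, I = (Args, Att, Supp, ⪯) an inverse problem w.r.t. σ, and τ a solution of I. Then for every s ∈ ℝ, the partial function δ obtained by restricting τ to {x ∈ Args : τ(x) ≠ s} is a strength change explanation of ⪯ w.r.t. σ and mutable set Args for the QBAG φ_s(I), i.e., δ ∈ SX_{φ_s(I), Args}^σ(⪯). -/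
variable {U : Type*}

open Classical in
/-- The partial function obtained by restricting an initial strength function `τ`
to `{x ∈ Args : τ(x) ≠ s}`. -/
noncomputable def restrictTau (Args : Set U) (τ : U → ℝ) (s : ℝ) : U → Option ℝ :=
  fun x => if x ∈ Args ∧ τ x ≠ s then some (τ x) else none

/-- If `τ` is a solution of the inverse problem `I = (Args, Att, Supp, ⪯)`
w.r.t. `σ`, then for every `s ∈ ℝ` the restriction of `τ` to
`{x ∈ Args : τ(x) ≠ s}` is an SX of `⪯` w.r.t. `σ` and mutable set `Args`
for the QBAG `φ_s(I)` (which assigns initial strength `s` to every argument). -/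
theorem inverse_solution_is_SX {U : Type*} (σ : QBAG U → U → ℝ)
    (Args : Set U) (Att Supp : Set (U × U)) (r : Set (U × U))
    (hfin : Args.Finite)
    (hAtt : Att ⊆ Args ×ˢ Args) (hSupp : Supp ⊆ Args ×ˢ Args)
    (hdisj : Att ∩ Supp = ∅)
    (τ : U → ℝ) (s : ℝ)
    (hτout : ∀ x ∉ Args, τ x = s)
    (hsol : fsOrder σ ⟨Args, τ, Att, Supp⟩ Args = r) :
    IsSX σ ⟨Args, fun _ => s, Att, Supp⟩ Args r (restrictTau Args τ s) := by
  refine ⟨?_, ?_, ?_⟩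
  · intro x v h
    unfold restrictTau at h
    split at h
    · rename_i hc; cases h; exact hc.2
    · exact absurd h (by simp)
  · intro x hx
    unfold ddom restrictTau at hx
    simp only [Set.mem_setOf_eq] at hx
    by_contra hn
    simp [hn] at hx
  · refine ⟨Args, le_refl _, ?_⟩
    have : applyChange ⟨Args, fun _ => s, Att, Supp⟩ (restrictTau Args τ s)
        = ⟨Args, τ, Att, Supp⟩ := by
      unfold applyChange restrictTau
      simp only [QBAG.mk.injEq]
      refine ⟨trivial, ?_, trivial, trivial⟩
      funext x
      by_cases hx : x ∈ Args
      · by_cases hs : τ x = s <;> simp [hx, hs]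
      · simp [hx, hτout x hx]
    rw [this, hsol]
end
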